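/- arXiv:2007.02107 — 3 statements merged into one kernel-verified Lean document; each statement's English description precedes it below -/
import Mathlib

section
/- If g : ℝ^N \ {0} → ℝ⁺ is admissible (i.e. ∬_{B×B} g(y-x) dy dx < ∞ where B is the unit ball), then there exists a constant C such that ∬_{B_r × B_r} g(y-x) dy dx ≤ C r^N for every 0 < r ≤ 1. -/
/-!
Some slice `y ↦ g (y - x₀)` of the admissibility integral with `x₀ ∈ B_{1/2}` is integrable on
`B`, so `g` is integrable on `B - x₀ ⊇ B_{1/2}`. For `r ≤ 1/4` and `x ∈ B_r`, translating by `x`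
bounds the inner integral `∫_{B_r} g (y - x) dy` by `∫_{B_{2r}} g ≤ ∫_{B_{1/2}} g`, hence
`ℜ(B_r) ≤ |B_r| ∫_{B_{1/2}} g = O(r^N)`. For `r > 1/4`, `ℜ(B_r) ≤ ℜ(B) ≤ 4^N ℜ(B) r^N`, the first
step because `g ≥ 0` off the diagonal `y = x`, which is null.
-/

open MeasureTheory Set Metric

/-- The Riesz interaction ℜ(F,G) = ∫_F ∫_G g(y-x) dy dx. -/
noncomputable def interaction (N : ℕ) (g : EuclideanSpace ℝ (Fin N) → ℝ)
    (F G : Set (EuclideanSpace ℝ (Fin N))) : ℝ :=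
  ∫ x in F, ∫ y in G, g (y - x)

theorem preimage_sub_const_ball {E : Type*} [SeminormedAddCommGroup E] (a x : E) (r : ℝ) :
    (· - x) ⁻¹' ball (a - x) r = ball a r := by
  ext y; simp

theorem MeasureTheory.Measure.addHaar_real_ball_of_pos {E : Type*} [NormedAddCommGroup E]
    [NormedSpace ℝ E] [FiniteDimensional ℝ E] [MeasurableSpace E] [BorelSpace E] (μ : Measure E)
    [μ.IsAddHaarMeasure] (x : E) {r : ℝ} (hr : 0 < r) :
    μ.real (ball x r) = r ^ Module.finrank ℝ E * μ.real (ball 0 1) := by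
  rw [measureReal_def, Measure.addHaar_ball_of_pos μ x hr, ENNReal.toReal_mul,
    ENNReal.toReal_ofReal (by positivity), measureReal_def]

section NullSingleton

variable {G : Type*} [AddGroup G] [MeasurableSpace G] {g : G → ℝ}

theorem ae_nonneg_comp_sub (μ : Measure G) [NullSingletonClass μ] (hg : ∀ z ≠ 0, 0 ≤ g z)
    (x : G) : ∀ᵐ y ∂μ, 0 ≤ g (y - x) :=
  ae_iff.2 <| measure_mono_null (fun _ hy => by_contra fun hyx => hy (hg _ (sub_ne_zero.2 hyx)))
    (measure_singleton x)

theorem ae_prod_sub_ne_zero [MeasurableSingletonClass G] [MeasurableSub₂ G] (μ ν : Measure G)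
    [SFinite ν] [NullSingletonClass ν] :
    ∀ᵐ p ∂μ.prod ν, p.2 - p.1 ≠ 0 := by
  rw [Measure.ae_prod_iff_ae_ae]
  · refine Filter.Eventually.of_forall fun x => ?_
    simp [sub_ne_zero, ae_iff]
  · exact (measurableSet_singleton 0).compl.preimage (measurable_snd.sub measurable_fst)

end NullSingleton

section Interaction

variable {E : Type*} [NormedAddCommGroup E] [MeasurableSpace E] [BorelSpace E]
  (μ : Measure E) {g : E → ℝ}

theorem setIntegral_setIntegral_comp_sub_mono [SecondCountableTopology E] [SFinite μ]
    [NullSingletonClass μ] (hg : ∀ z ≠ 0, 0 ≤ g z) {s t s' t' : Set E} (hs : s ⊆ s') (ht : t ⊆ t')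
    (hint : IntegrableOn (fun p : E × E => g (p.2 - p.1)) (s' ×ˢ t') (μ.prod μ)) :
    ∫ x in s, ∫ y in t, g (y - x) ∂μ ∂μ ≤ ∫ x in s', ∫ y in t', g (y - x) ∂μ ∂μ := by
  rw [← setIntegral_prod _ (hint.mono_set (prod_mono hs ht)), ← setIntegral_prod _ hint]
  exact setIntegral_mono_set hint
    (ae_restrict_of_ae ((ae_prod_sub_ne_zero μ μ).mono fun p hp => hg _ hp))
    (prod_mono hs ht).eventuallyLE

variable [μ.IsAddRightInvariant]

theorem setIntegral_ball_comp_sub (a x : E) (r : ℝ) :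
    ∫ y in ball a r, g (y - x) ∂μ = ∫ z in ball (a - x) r, g z ∂μ := by
  rw [← (measurePreserving_sub_right μ x).setIntegral_preimage_emb
    (MeasurableEquiv.subRight x).measurableEmbedding g, preimage_sub_const_ball]

theorem integrableOn_ball_comp_sub_iff {a x : E} {r : ℝ} :
    IntegrableOn (fun y => g (y - x)) (ball a r) μ ↔ IntegrableOn g (ball (a - x) r) μ := by
  rw [← (measurePreserving_sub_right μ x).integrableOn_comp_preimage
    (MeasurableEquiv.subRight x).measurableEmbedding (f := g), preimage_sub_const_ball]
  rfl

theorem integrableOn_ball_half_of_integrableOn_prod [SFinite μ] [μ.IsOpenPosMeasure] {R : ℝ}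
    (hR : 0 < R) (hint : IntegrableOn (fun p : E × E => g (p.2 - p.1)) (ball 0 R ×ˢ ball 0 R)
      (μ.prod μ)) :
    IntegrableOn g (ball 0 (R / 2)) μ := by
  have hslices : ∀ᵐ x ∂μ.restrict (ball 0 R), IntegrableOn (fun y => g (y - x)) (ball 0 R) μ := by
    rw [IntegrableOn, ← Measure.prod_restrict] at hint
    exact hint.prod_right_ae
  have : (ae (μ.restrict (ball (0 : E) (R / 2)))).NeBot :=
    ae_restrict_neBot.2 (measure_ball_pos μ 0 (by positivity)).ne'
  obtain ⟨x, hx, hxint⟩ := ((ae_restrict_mem (μ := μ) (measurableSet_ball (ε := R / 2))).and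
    (ae_mono (Measure.restrict_mono (ball_subset_ball (by linarith)) le_rfl) hslices)).exists
  rw [integrableOn_ball_comp_sub_iff, zero_sub] at hxint
  refine hxint.mono_set (ball_subset_ball' ?_)
  rw [mem_ball_zero_iff] at hx
  rw [dist_zero_left, norm_neg]
  linarith

variable [NullSingletonClass μ]

theorem setIntegral_ball_comp_sub_le (hg : ∀ z ≠ 0, 0 ≤ g z) {r : ℝ}
    (hint : IntegrableOn g (ball 0 (2 * r)) μ) {x : E} (hx : x ∈ ball 0 r) :
    ∫ y in ball 0 r, g (y - x) ∂μ ≤ ∫ z in ball 0 (2 * r), g z ∂μ := by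
  rw [setIntegral_ball_comp_sub, zero_sub]
  refine setIntegral_mono_set hint (ae_restrict_of_ae (by simpa using ae_nonneg_comp_sub μ hg 0))
    (ball_subset_ball' ?_).eventuallyLE
  rw [mem_ball_zero_iff] at hx
  rw [dist_zero_right, norm_neg]
  linarith

theorem setIntegral_ball_setIntegral_ball_comp_sub_le [ProperSpace E]
    [IsFiniteMeasureOnCompacts μ] (hg : ∀ z ≠ 0, 0 ≤ g z) {r : ℝ}
    (hint : IntegrableOn g (ball 0 (2 * r)) μ) :
    ∫ x in ball 0 r, ∫ y in ball 0 r, g (y - x) ∂μ ∂μ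
      ≤ μ.real (ball 0 r) * ∫ z in ball 0 (2 * r), g z ∂μ := by
  rw [← smul_eq_mul, ← setIntegral_const]
  exact integral_mono_of_nonneg
    (ae_of_all _ fun x => integral_nonneg_of_ae (ae_restrict_of_ae (ae_nonneg_comp_sub μ hg x)))
    (integrableOn_const measure_ball_lt_top.ne)
    ((ae_restrict_mem measurableSet_ball).mono fun _ hx =>
      setIntegral_ball_comp_sub_le μ hg hint hx)

end Interaction

theorem exists_setIntegral_ball_ball_comp_sub_le_mul_pow {E : Type*} [NormedAddCommGroup E]
    [NormedSpace ℝ E] [FiniteDimensional ℝ E] [Nontrivial E] [MeasurableSpace E] [BorelSpace E]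
    (μ : Measure E) [μ.IsAddHaarMeasure] {g : E → ℝ} (hg : ∀ z ≠ 0, 0 ≤ g z)
    (hint : IntegrableOn (fun p : E × E => g (p.2 - p.1)) (ball 0 1 ×ˢ ball 0 1) (μ.prod μ)) :
    ∃ C : ℝ, ∀ r : ℝ, 0 < r → r ≤ 1 →
      ∫ x in ball 0 r, ∫ y in ball 0 r, g (y - x) ∂μ ∂μ ≤ C * r ^ Module.finrank ℝ E := by
  set d := Module.finrank ℝ E
  have hhalf := integrableOn_ball_half_of_integrableOn_prod μ one_pos hint
  set A := ∫ z in ball 0 (1 / 2), g z ∂μ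
  set I := ∫ x in ball 0 1, ∫ y in ball 0 1, g (y - x) ∂μ ∂μ
  have hI : 0 ≤ I := integral_nonneg fun x =>
    integral_nonneg_of_ae (ae_restrict_of_ae (ae_nonneg_comp_sub μ hg x))
  refine ⟨max (μ.real (ball 0 1) * A) (4 ^ d * I), fun r hr hr1 => ?_⟩
  rcases le_or_gt r (1 / 4) with hsmall | hlarge
  · have hsub : ball (0 : E) (2 * r) ⊆ ball 0 (1 / 2) := ball_subset_ball (by linarith)
    calc _ ≤ μ.real (ball 0 r) * ∫ z in ball 0 (2 * r), g z ∂μ :=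
          setIntegral_ball_setIntegral_ball_comp_sub_le μ hg (hhalf.mono_set hsub)
      _ ≤ μ.real (ball 0 r) * A := by
          gcongr
          exact setIntegral_mono_set hhalf
            (ae_restrict_of_ae (by simpa using ae_nonneg_comp_sub μ hg 0)) hsub.eventuallyLE
      _ = μ.real (ball 0 1) * A * r ^ d := by
          rw [Measure.addHaar_real_ball_of_pos μ 0 hr]; ring
      _ ≤ _ := by gcongr; exact le_max_left _ _
  · calc _ ≤ I := setIntegral_setIntegral_comp_sub_mono μ hg (ball_subset_ball hr1)
          (ball_subset_ball hr1) hint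
      _ ≤ (4 * r) ^ d * I := le_mul_of_one_le_left hI (one_le_pow₀ (by linarith))
      _ ≤ _ := by rw [mul_pow, mul_right_comm]; gcongr; exact le_max_right _ _

theorem interaction_ball_le (N : ℕ) (g : EuclideanSpace ℝ (Fin N) → ℝ)
    (hg_pos : ∀ x ≠ 0, 0 ≤ g x)
    (hadm : IntegrableOn
      (fun p : EuclideanSpace ℝ (Fin N) × EuclideanSpace ℝ (Fin N) => g (p.2 - p.1))
      ((ball (0 : EuclideanSpace ℝ (Fin N)) 1) ×ˢ (ball (0 : EuclideanSpace ℝ (Fin N)) 1))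
      volume) :
    ∃ C : ℝ, ∀ r : ℝ, 0 < r → r ≤ 1 →
      interaction N g (ball (0 : EuclideanSpace ℝ (Fin N)) r)
          (ball (0 : EuclideanSpace ℝ (Fin N)) r) ≤ C * r ^ N := by
  rcases Nat.eq_zero_or_pos N with rfl | hN
  · have hball (r : ℝ) (hr : 0 < r) : ball (0 : EuclideanSpace ℝ (Fin 0)) r = univ :=
      eq_univ_of_forall fun x => by simpa [Subsingleton.elim x 0] using hr
    refine ⟨interaction 0 g univ univ, fun r hr _ => ?_⟩
    rw [hball r hr, pow_zero, mul_one]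
  · have : NeZero N := ⟨hN.ne'⟩
    rw [Measure.volume_eq_prod] at hadm
    simpa only [interaction, finrank_euclideanSpace_fin] using
      exists_setIntegral_ball_ball_comp_sub_le_mul_pow volume hg_pos hadm
end

section
/- For every 0 < x < π/2 one has x(1 + cos x + cos² x) ≥ sin x (1 + 2 cos x). -/
/-!
With `c = cos x`, `s = sin x`, the difference `x (1 + c + c²) - s (1 + 2c)` vanishes at `0` and
has derivative `s (3 s - x (1 + 2c))`. The second factor vanishes at `0` as well, and its
derivative `c - 1 + 2 x s` is nonnegative on `[0, π/2]` because `1 - c ≤ x² / 2` while Jordan's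
inequality gives `s ≥ 2x/π ≥ x/4`.
-/

open Real Set

lemma le_of_hasDerivAt_nonneg_on_Ioo {f f' : ℝ → ℝ} {a b x : ℝ}
    (hf : ∀ t, HasDerivAt f (f' t) t) (hf' : ∀ t ∈ Ioo a b, 0 ≤ f' t)
    (hax : a ≤ x) (hxb : x ≤ b) : f a ≤ f x := by
  have hmono : MonotoneOn f (Icc a b) :=
    monotoneOn_of_hasDerivWithinAt_nonneg (convex_Icc a b)
      (HasDerivAt.continuousOn fun t _ ↦ hf t)
      (fun t _ ↦ (hf t).hasDerivWithinAt)
      (fun t ht ↦ hf' t (by rwa [interior_Icc] at ht))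
  exact hmono (left_mem_Icc.2 (hax.trans hxb)) ⟨hax, hxb⟩ hax

lemma one_sub_cos_le_two_mul_mul_sin {x : ℝ} (hx0 : 0 ≤ x) (hx : x ≤ π / 2) :
    1 - cos x ≤ 2 * x * sin x := by
  have hcos : 1 - x ^ 2 / 2 ≤ cos x := one_sub_sq_div_two_le_cos
  have hsin : x / 4 ≤ sin x := calc
    x / 4 ≤ 2 / π * x := by
      rw [div_mul_eq_mul_div, div_le_div_iff₀ four_pos pi_pos]
      nlinarith [pi_le_four]
    _ ≤ sin x := mul_le_sin hx0 hx
  nlinarith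

lemma hasDerivAt_three_mul_sin_sub (t : ℝ) :
    HasDerivAt (fun t ↦ 3 * sin t - t * (1 + 2 * cos t)) (cos t - 1 + 2 * t * sin t) t := by
  refine (((hasDerivAt_sin t).const_mul 3).sub
    ((hasDerivAt_id' t).mul (((hasDerivAt_cos t).const_mul 2).const_add 1))).congr_deriv ?_
  ring

lemma mul_one_add_two_mul_cos_le_three_mul_sin {x : ℝ} (hx0 : 0 ≤ x) (hx : x ≤ π / 2) :
    x * (1 + 2 * cos x) ≤ 3 * sin x := by
  have h := le_of_hasDerivAt_nonneg_on_Ioo hasDerivAt_three_mul_sin_sub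
    (fun t ht ↦ by linarith [one_sub_cos_le_two_mul_mul_sin ht.1.le ht.2.le]) hx0 hx
  simp only [sin_zero, cos_zero] at h
  linarith

lemma hasDerivAt_mul_one_add_cos_add_cos_sq_sub (t : ℝ) :
    HasDerivAt (fun t ↦ t * (1 + cos t + cos t ^ 2) - sin t * (1 + 2 * cos t))
      (sin t * (3 * sin t - t * (1 + 2 * cos t))) t := by
  refine (((hasDerivAt_id' t).mul (((hasDerivAt_cos t).const_add 1).add
      ((hasDerivAt_cos t).pow 2))).sub
    ((hasDerivAt_sin t).mul (((hasDerivAt_cos t).const_mul 2).const_add 1))).congr_deriv ?_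
  simp only [Pi.add_apply, Pi.pow_apply]
  linear_combination -sin_sq_add_cos_sq t

theorem trig_ineq_one (x : ℝ) (hx0 : 0 < x) (hx : x < π / 2) :
    x * (1 + cos x + cos x ^ 2) ≥ sin x * (1 + 2 * cos x) := by
  have h := le_of_hasDerivAt_nonneg_on_Ioo hasDerivAt_mul_one_add_cos_add_cos_sq_sub
    (fun t ht ↦ mul_nonneg (sin_nonneg_of_nonneg_of_le_pi ht.1.le (by linarith [pi_pos, ht.2]))
      (by linarith [mul_one_add_two_mul_cos_le_three_mul_sin ht.1.le ht.2.le]))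
    hx0.le hx.le
  simp only [zero_mul, sin_zero, sub_zero] at h
  linarith
end

section
/- Let ρ(δ), θ(δ), τ(δ) = 2ρθ, μ(δ) denote respectively the radius, half-angle, length, and enclosed signed area of the family of circular arcs through P = (cos θ̄, ±sin θ̄) and (1+δ, 0) with centre (η(δ), 0) on the x-axis, for 0 < θ̄ < π/2. Then at δ = 0: ρ'(0) = −cos θ̄/(1 − cos θ̄), θ'(0) = sin θ̄/(1 − cos θ̄), and μ'(0) = τ'(0) = 2(sin θ̄ − θ̄ cos θ̄)/(1 − cos θ̄). More generally, for any δ, τ' = 2(sin θ − θ cos θ)/(1 − cos θ) and μ' = ρ τ'. -/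
/-!
Differentiating the constraints `ρ sin θ = sin θ̄`, `ρ cos θ + η = cos θ̄`, `η + ρ = 1 + δ` gives a
linear system for `(ρ', θ', η')` with solution `ρ' = -cos θ / (1 - cos θ)`,
`ρ θ' = sin θ / (1 - cos θ)`, `η' = 1 / (1 - cos θ)`. Then `τ' = 2 (ρ' θ + ρ θ')` is the stated
formula, and `μ' = 2 ρ ρ' θ + ρ² θ' + η' ρ sin θ = ρ τ'` because `η' sin θ = ρ θ'`.
-/

open Real Set Filter

theorem HasDerivAt.unique_of_eqOn {𝕜 F : Type*} [NontriviallyNormedField 𝕜]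
    [NormedAddCommGroup F] [NormedSpace 𝕜 F] {f g : 𝕜 → F} {f' g' : F} {s : Set 𝕜} {x : 𝕜}
    (hf : HasDerivAt f f' x) (hs : IsOpen s) (hx : x ∈ s) (hfg : EqOn f g s)
    (hg : HasDerivAt g g' x) : f' = g' :=
  hf.unique (hg.congr_of_eventuallyEq (eventuallyEq_of_mem (hs.mem_nhds hx) hfg))

theorem arc_constraints_deriv {ρ θ η : ℝ → ℝ} {I : Set ℝ} {s₀ c₀ ρ' θ' η' δ : ℝ}
    (hI : IsOpen I) (hδ : δ ∈ I)
    (hsin : ∀ x ∈ I, ρ x * sin (θ x) = s₀) (hcos : ∀ x ∈ I, ρ x * cos (θ x) = c₀ - η x)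
    (hcentre : ∀ x ∈ I, η x + ρ x = 1 + x)
    (hρ : HasDerivAt ρ ρ' δ) (hθ : HasDerivAt θ θ' δ) (hη : HasDerivAt η η' δ) :
    ρ' * sin (θ δ) + ρ δ * (cos (θ δ) * θ') = 0 ∧
      ρ' * cos (θ δ) + ρ δ * (-sin (θ δ) * θ') + η' = 0 ∧ η' + ρ' = 1 :=
  ⟨(hρ.mul hθ.sin).unique_of_eqOn hI hδ (fun x hx => hsin x hx) (hasDerivAt_const δ s₀),
    ((hρ.mul hθ.cos).add hη).unique_of_eqOn hI hδ
      (fun x hx => show ρ x * cos (θ x) + η x = c₀ by linarith [hcos x hx])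
      (hasDerivAt_const δ c₀),
    (hη.add hρ).unique_of_eqOn hI hδ (fun x hx => hcentre x hx) ((hasDerivAt_id δ).const_add 1)⟩

theorem arc_rates {r t r' t' e' T' M' : ℝ} (ht : sin t ≠ 0)
    (h_sin : r' * sin t + r * (cos t * t') = 0)
    (h_cos : r' * cos t + r * (-sin t * t') + e' = 0)
    (h_centre : e' + r' = 1)
    (h_length : T' = 2 * r' * t + 2 * r * t')
    (h_area : M' = 2 * r * r' * t + r ^ 2 * t' + e' * (r * sin t)) :
    r' = -cos t / (1 - cos t) ∧ r * t' = sin t / (1 - cos t) ∧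
      T' = 2 * (sin t - t * cos t) / (1 - cos t) ∧ M' = r * T' := by
  have hc : 1 - cos t ≠ 0 :=
    sub_ne_zero.mpr fun h => ht (sin_eq_zero_iff_cos_eq.mpr (Or.inl h.symm))
  have h_angle : r * t' * (1 - cos t) = sin t := by
    linear_combination (cos t - 1) * h_sin - sin t * h_cos + sin t * h_centre
      - r * t' * sin_sq_add_cos_sq t
  have h_radius : r' * (1 - cos t) = -cos t :=
    mul_left_cancel₀ ht (by linear_combination (1 - cos t) * h_sin - cos t * h_angle)
  have h_length' : T' * (1 - cos t) = 2 * (sin t - t * cos t) := by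
    linear_combination (1 - cos t) * h_length + 2 * t * h_radius + 2 * h_angle
  refine ⟨(eq_div_iff hc).mpr h_radius, (eq_div_iff hc).mpr h_angle,
    (eq_div_iff hc).mpr h_length', mul_right_cancel₀ hc ?_⟩
  linear_combination (1 - cos t) * h_area - r * h_length' + 2 * r * t * h_radius
    + r * h_angle + r * sin t * (1 - cos t) * h_centre - r * sin t * h_radius

theorem arc_derivative_formulas_general (θbar : ℝ)
    (I : Set ℝ) (hI : IsOpen I) (h0 : (0 : ℝ) ∈ I)
    (ρ θ η τ μ ρd θd ηd τd μd : ℝ → ℝ)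
    (hθrange : ∀ δ ∈ I, θ δ ∈ Ioo 0 π)
    -- defining constraints of the family
    (hsin : ∀ δ ∈ I, ρ δ * sin (θ δ) = sin θbar)
    (hcos : ∀ δ ∈ I, ρ δ * cos (θ δ) = cos θbar - η δ)
    (hcentre : ∀ δ ∈ I, η δ + ρ δ = 1 + δ)
    (hτ : ∀ δ ∈ I, τ δ = 2 * ρ δ * θ δ)
    (hμ : ∀ δ ∈ I, μ δ = (ρ δ) ^ 2 * θ δ + η δ * sin θbar - θbar)
    (hρ0 : ρ 0 = 1) (hθ0 : θ 0 = θbar)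
    -- differentiability of the family
    (hρ' : ∀ δ ∈ I, HasDerivAt ρ (ρd δ) δ)
    (hθ' : ∀ δ ∈ I, HasDerivAt θ (θd δ) δ)
    (hη' : ∀ δ ∈ I, HasDerivAt η (ηd δ) δ)
    (hτ' : ∀ δ ∈ I, HasDerivAt τ (τd δ) δ)
    (hμ' : ∀ δ ∈ I, HasDerivAt μ (μd δ) δ) :
    ρd 0 = -(cos θbar) / (1 - cos θbar) ∧
    θd 0 = sin θbar / (1 - cos θbar) ∧
    μd 0 = 2 * (sin θbar - θbar * cos θbar) / (1 - cos θbar) ∧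
    τd 0 = 2 * (sin θbar - θbar * cos θbar) / (1 - cos θbar) ∧
    (∀ δ ∈ I, τd δ = 2 * (sin (θ δ) - θ δ * cos (θ δ)) / (1 - cos (θ δ)) ∧
      μd δ = ρ δ * τd δ) := by
  have rates : ∀ δ ∈ I, ρd δ = -cos (θ δ) / (1 - cos (θ δ)) ∧
      ρ δ * θd δ = sin (θ δ) / (1 - cos (θ δ)) ∧
      τd δ = 2 * (sin (θ δ) - θ δ * cos (θ δ)) / (1 - cos (θ δ)) ∧ μd δ = ρ δ * τd δ := by
    intro δ hδ
    obtain ⟨h_sin, h_cos, h_centre⟩ :=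
      arc_constraints_deriv hI hδ hsin hcos hcentre (hρ' δ hδ) (hθ' δ hδ) (hη' δ hδ)
    have h_length : τd δ = 2 * ρd δ * θ δ + 2 * ρ δ * θd δ :=
      (hτ' δ hδ).unique_of_eqOn hI hδ (fun x hx => hτ x hx)
        (((hρ' δ hδ).const_mul 2).mul (hθ' δ hδ))
    have h_area : μd δ = 2 * ρ δ * ρd δ * θ δ + ρ δ ^ 2 * θd δ + ηd δ * (ρ δ * sin (θ δ)) :=
      (hμ' δ hδ).unique_of_eqOn hI hδ (fun x hx => hμ x hx)
        (((((hρ' δ hδ).fun_pow 2).mul (hθ' δ hδ)).add ((hη' δ hδ).mul_const _)).sub_const _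
          |>.congr_deriv (by rw [hsin δ hδ]; ring))
    exact arc_rates (sin_pos_of_pos_of_lt_pi (hθrange δ hδ).1 (hθrange δ hδ).2).ne'
      h_sin h_cos h_centre h_length h_area
  obtain ⟨hρd, hθd, hτd, hμd⟩ := rates 0 h0
  rw [hθ0] at hρd hθd hτd
  rw [hρ0, one_mul] at hθd hμd
  exact ⟨hρd, hθd, hμd ▸ hτd, hτd, fun δ hδ => (rates δ hδ).2.2⟩

/-- Derivative formulas for the family of circular arcs through
`P = (cos θ̄, ± sin θ̄)` and `(1+δ, 0)` with centre `(η(δ), 0)` on the x-axis: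
radius `ρ(δ)`, half-angle `θ(δ)`, length `τ(δ) = 2ρθ`, signed enclosed area
`μ(δ) = ρ²θ + η sin θ̄ − θ̄`. -/
theorem arc_derivative_formulas (θbar : ℝ) (hθbar : θbar ∈ Ioo 0 (π / 2))
    (I : Set ℝ) (hI : IsOpen I) (h0 : (0 : ℝ) ∈ I)
    (ρ θ η τ μ ρd θd ηd τd μd : ℝ → ℝ)
    (hρpos : ∀ δ ∈ I, 0 < ρ δ) (hθrange : ∀ δ ∈ I, θ δ ∈ Ioo 0 π)
    -- defining constraints of the family
    (hsin : ∀ δ ∈ I, ρ δ * sin (θ δ) = sin θbar)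
    (hcos : ∀ δ ∈ I, ρ δ * cos (θ δ) = cos θbar - η δ)
    (hcentre : ∀ δ ∈ I, η δ + ρ δ = 1 + δ)
    (hτ : ∀ δ ∈ I, τ δ = 2 * ρ δ * θ δ)
    (hμ : ∀ δ ∈ I, μ δ = (ρ δ) ^ 2 * θ δ + η δ * sin θbar - θbar)
    (hρ0 : ρ 0 = 1) (hθ0 : θ 0 = θbar) (hη0 : η 0 = 0)
    -- differentiability of the family
    (hρ' : ∀ δ ∈ I, HasDerivAt ρ (ρd δ) δ)
    (hθ' : ∀ δ ∈ I, HasDerivAt θ (θd δ) δ)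
    (hη' : ∀ δ ∈ I, HasDerivAt η (ηd δ) δ)
    (hτ' : ∀ δ ∈ I, HasDerivAt τ (τd δ) δ)
    (hμ' : ∀ δ ∈ I, HasDerivAt μ (μd δ) δ) :
    ρd 0 = -(cos θbar) / (1 - cos θbar) ∧
    θd 0 = sin θbar / (1 - cos θbar) ∧
    μd 0 = 2 * (sin θbar - θbar * cos θbar) / (1 - cos θbar) ∧
    τd 0 = 2 * (sin θbar - θbar * cos θbar) / (1 - cos θbar) ∧
    (∀ δ ∈ I, τd δ = 2 * (sin (θ δ) - θ δ * cos (θ δ)) / (1 - cos (θ δ)) ∧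
      μd δ = ρ δ * τd δ) :=
  arc_derivative_formulas_general θbar I hI h0 ρ θ η τ μ ρd θd ηd τd μd hθrange hsin hcos hcentre hτ
    hμ hρ0 hθ0 hρ' hθ' hη' hτ' hμ'
end
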